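/- Let V be a finite type with n = |V| and let F be a nonempty superset-closed family of finsets of V such that every subset of V of cardinality n − 1 belongs to F. A map φ from F to F is a graph automorphism of the TAR graph of F if and only if there exist a finset R of V that is disjoint from every minimal member of F and a bijection ψ : V ≃ V that maps every minimal member of F to a minimal member of F of the same cardinality, such that φ(S) = ψ(S) △ R for every S ∈ F (where ψ(S) is the image finset and △ is symmetric difference). -/

import Mathlib

variable {V : Type*} [Fintype V] [DecidableEq V]

/-- A family of finsets is superset-closed if it is closed under taking supersets. -/
def SupersetClosed (F : Finset (Finset V)) : Prop :=
  ∀ ⦃S T : Finset V⦄, S ∈ F → S ⊆ T → T ∈ F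

/-- A minimal member of a family: a member no proper subset of which is a member. -/
def IsMinimalMem (F : Finset (Finset V)) (M : Finset V) : Prop :=
  M ∈ F ∧ ∀ M' : Finset V, M' ⊂ M → M' ∉ F

/-- The TAR graph of a family of finsets: vertices are the members of the family,
two members being adjacent iff their symmetric difference has exactly one element. -/
def TARGraph (F : Finset (Finset V)) : SimpleGraph {S : Finset V // S ∈ F} where
  Adj S T := (symmDiff S.1 T.1).card = 1
  symm := ⟨fun S T h => by rwa [symmDiff_comm] at h⟩
  loopless := ⟨fun S h => by simp [symmDiff_self] at h⟩

instance (F : Finset (Finset V)) : DecidableRel (TARGraph F).Adj :=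
  fun S T => inferInstanceAs (Decidable ((symmDiff S.1 T.1).card = 1))

/-!
An automorphism `e` of the TAR graph preserves graph distances, and for a superset-closed family
the graph distance between two members is the size of their symmetric difference. Put
`W = e univ`. Each co-singleton `univ \ {v}` is adjacent to `univ`, so `e (univ \ {v}) = W ∆ {ψ v}`
for an injective, hence bijective, `ψ`. Comparing the distances from `e S` to `W` and to the
`W ∆ {ψ v}` shows `e S ∆ W = ψ (S ∆ univ)`, i.e. `e S = ψ S ∆ R` with `R = univ ∆ W`. Finally, a map
`S ↦ ψ S ∆ R` preserves a superset-closed family exactly when `R` avoids its minimal members and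
`ψ` permutes them; conversely such a map preserves symmetric differences, so it is an automorphism.
-/

open Finset Function
open scoped symmDiff

lemma Equiv.Perm.iff_apply_of_restrict_surjective {α : Type*} {p : α → Prop} (g : Equiv.Perm α)
    {f : {a // p a} → {a // p a}} (hf : Surjective f) (hfg : ∀ a, (f a).1 = g a.1) (a : α) :
    p a ↔ p (g a) := by
  refine ⟨fun ha => hfg ⟨a, ha⟩ ▸ (f ⟨a, ha⟩).2, fun hga => ?_⟩
  obtain ⟨b, hb⟩ := hf ⟨g a, hga⟩
  obtain rfl : b.1 = a := g.injective (by rw [← hfg, hb])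
  exact b.2

section Minimal

variable {α : Type*} {F : Finset (Finset α)} {M S : Finset α}

lemma isMinimalMem_iff_minimal : IsMinimalMem F M ↔ Minimal (· ∈ F) M := by
  rw [minimal_iff_forall_lt]
  rfl

lemma exists_isMinimalMem_subset (hS : S ∈ F) : ∃ M, IsMinimalMem F M ∧ M ⊆ S := by
  obtain ⟨M, hMS, hM⟩ := exists_minimal_le_of_wellFoundedLT (· ∈ F) S hS
  exact ⟨M, isMinimalMem_iff_minimal.2 hM, hMS⟩

lemma SupersetClosed.mem_iff_exists_isMinimalMem_subset (hsup : SupersetClosed F) :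
    S ∈ F ↔ ∃ M, IsMinimalMem F M ∧ M ⊆ S :=
  ⟨exists_isMinimalMem_subset, fun ⟨_, hM, hMS⟩ => hsup hM.1 hMS⟩

end Minimal

section

variable {α : Type*} [DecidableEq α]

namespace Finset

variable {s t : Finset α} {a b : α}

lemma symmDiff_singleton_of_mem (h : a ∈ s) : s ∆ {a} = s.erase a := by
  ext x
  by_cases hx : x = a <;> simp [mem_symmDiff, hx, h]

lemma symmDiff_singleton_of_notMem (h : a ∉ s) : s ∆ {a} = insert a s := by
  ext x
  by_cases hx : x = a <;> simp [mem_symmDiff, hx, h]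

lemma eq_symmDiff_singleton_of_card_symmDiff_eq_one (h : (s ∆ t).card = 1) :
    ∃ a, s = t ∆ {a} := by
  obtain ⟨a, ha⟩ := card_eq_one.1 h
  exact ⟨a, by rw [← ha, symmDiff_comm s, symmDiff_symmDiff_cancel_left]⟩

lemma image_symm_image {β : Type*} [DecidableEq β] (ψ : α ≃ β) (s : Finset β) :
    (s.image ψ.symm).image ψ = s := by
  rw [image_image, ψ.self_comp_symm, image_id]

/-- Toggling one element changes the size by `±1` according to membership. -/
lemma mem_iff_mem_of_card_symmDiff_singleton_eq (hcard : s.card = t.card)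
    (hcard' : (s ∆ {a}).card = (t ∆ {b}).card) : a ∈ s ↔ b ∈ t := by
  by_cases ha : a ∈ s <;> by_cases hb : b ∈ t
  all_goals
    simp only [ha, hb, symmDiff_singleton_of_mem, symmDiff_singleton_of_notMem, card_erase_of_mem,
      card_insert_of_notMem, not_false_eq_true] at hcard' ⊢
  · have := card_pos.2 ⟨a, ha⟩
    omega
  · have := card_pos.2 ⟨b, hb⟩
    omega

lemma eq_image_of_card_symmDiff_singleton_eq (ψ : α ≃ α) (hcard : s.card = t.card)
    (hcard' : ∀ v, (s ∆ {ψ v}).card = (t ∆ {v}).card) : s = t.image ψ := by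
  ext x
  obtain ⟨v, rfl⟩ := ψ.surjective x
  rw [ψ.injective.mem_finset_image]
  exact mem_iff_mem_of_card_symmDiff_singleton_eq hcard (hcard' v)

end Finset

def imageSymmDiffPerm (ψ : α ≃ α) (R : Finset α) : Equiv.Perm (Finset α) :=
  ψ.finsetCongr.trans (symmDiff_left_involutive R).toPerm

@[simp]
lemma imageSymmDiffPerm_apply (ψ : α ≃ α) (R S : Finset α) :
    imageSymmDiffPerm ψ R S = S.image ψ ∆ R := by
  simp [imageSymmDiffPerm, map_eq_image]

lemma card_symmDiff_imageSymmDiffPerm (ψ : α ≃ α) (R S T : Finset α) :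
    (imageSymmDiffPerm ψ R S ∆ imageSymmDiffPerm ψ R T).card = (S ∆ T).card := by
  rw [imageSymmDiffPerm_apply, imageSymmDiffPerm_apply, symmDiff_symmDiff_symmDiff_comm,
    symmDiff_self, symmDiff_bot, ← image_symmDiff _ _ ψ.injective,
    card_image_of_injective _ ψ.injective]

theorem exists_eq_image_symmDiff_of_card_symmDiff_eq [Fintype α] {F : Finset (Finset α)}
    (huniv : univ ∈ F) (herase : ∀ v, univ.erase v ∈ F) (f : {S // S ∈ F} → Finset α)
    (hf : ∀ S T, (f S ∆ f T).card = (S.1 ∆ T.1).card) :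
    ∃ (ψ : α ≃ α) (R : Finset α), ∀ S, f S = S.1.image ψ ∆ R := by
  set U : {S // S ∈ F} := ⟨univ, huniv⟩
  set E : α → {S // S ∈ F} := fun v => ⟨univ.erase v, herase v⟩
  have hE : ∀ v, (E v).1 = univ ∆ {v} := fun v => (symmDiff_singleton_of_mem (mem_univ v)).symm
  have hσ : ∀ v, ∃ w, f (E v) = f U ∆ {w} := fun v =>
    eq_symmDiff_singleton_of_card_symmDiff_eq_one (by
      rw [hf, hE, symmDiff_comm, symmDiff_symmDiff_cancel_left, card_singleton])
  choose σ hσ using hσ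
  have hσinj : Injective σ := by
    intro u v huv
    have h := hf (E u) (E v)
    rw [hσ, hσ, huv, symmDiff_self, hE, hE, symmDiff_symmDiff_symmDiff_comm, symmDiff_self,
      bot_symmDiff] at h
    exact singleton_injective (symmDiff_eq_bot.1 (card_eq_zero.1 h.symm))
  set ψ : α ≃ α := Equiv.ofBijective σ hσinj.bijective_of_finite
  refine ⟨ψ, univ ∆ f U, fun S => ?_⟩
  have key : f S ∆ f U = (S.1 ∆ univ).image ψ := by
    refine eq_image_of_card_symmDiff_singleton_eq ψ (hf S U) fun v => ?_
    have h := hf S (E v)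
    rwa [hσ, hE, ← symmDiff_assoc, ← symmDiff_assoc] at h
  rw [image_symmDiff _ _ ψ.injective, image_univ_equiv] at key
  rw [← symmDiff_assoc, ← key, symmDiff_symmDiff_cancel_right]

section Family

variable {F : Finset (Finset α)} {M R S T : Finset α}

lemma IsMinimalMem.image_of_forall_mem_iff {ψ : α ≃ α} (hψ : ∀ S, S ∈ F ↔ S.image ψ ∈ F)
    (hM : IsMinimalMem F M) : IsMinimalMem F (M.image ψ) := by
  refine ⟨(hψ M).1 hM.1, fun M' hM' hM'F => hM.2 (M'.image ψ.symm) ?_ ((hψ _).2 ?_)⟩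
  · rwa [← image_ssubset_image ψ.injective, image_symm_image]
  · rwa [image_symm_image]

lemma exists_isMinimalMem_image_eq [Finite α] {ψ : α ≃ α}
    (hψ : ∀ M, IsMinimalMem F M → IsMinimalMem F (M.image ψ)) (hT : IsMinimalMem F T) :
    ∃ M, IsMinimalMem F M ∧ M.image ψ = T := by
  let f : {M // IsMinimalMem F M} → {M // IsMinimalMem F M} := fun M => ⟨M.1.image ψ, hψ _ M.2⟩
  have hf : Injective f := fun M M' h =>
    Subtype.ext (image_injective ψ.injective (congrArg Subtype.val h))
  obtain ⟨M, hM⟩ := Finite.injective_iff_surjective.1 hf ⟨T, hT⟩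
  exact ⟨M.1, M.2, congrArg Subtype.val hM⟩

namespace SupersetClosed

lemma exists_symmDiff_singleton_mem (hsup : SupersetClosed F) (hS : S ∈ F) (hT : T ∈ F)
    (hne : S ≠ T) : ∃ v ∈ S ∆ T, S ∆ {v} ∈ F := by
  by_cases hTS : T ⊆ S
  · obtain ⟨v, hv⟩ := sdiff_nonempty.2 fun h => hne (subset_antisymm h hTS)
    rw [mem_sdiff] at hv
    refine ⟨v, mem_symmDiff.2 (Or.inl hv), ?_⟩
    rw [symmDiff_singleton_of_mem hv.1]
    exact hsup hT (subset_erase.2 ⟨hTS, hv.2⟩)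
  · obtain ⟨v, hv⟩ := sdiff_nonempty.2 hTS
    rw [mem_sdiff] at hv
    refine ⟨v, mem_symmDiff.2 (Or.inr hv), ?_⟩
    rw [symmDiff_singleton_of_notMem hv.2]
    exact hsup hS (subset_insert _ _)

lemma sdiff_mem_of_forall_mem_iff (hsup : SupersetClosed F) {ψ : α ≃ α}
    (hg : ∀ S, S ∈ F ↔ S.image ψ ∆ R ∈ F) (hT : T ∈ F) : T \ R ∈ F := by
  have hX : (T \ R).image ψ.symm ∈ F := by
    rw [hg, image_symm_image, sdiff_symmDiff_eq_sup]
    exact hsup hT subset_union_left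
  have hY : (T ∪ R).image ψ.symm ∈ F :=
    hsup hX (image_subset_image (sdiff_subset.trans subset_union_left))
  rwa [hg, image_symm_image, ← Finset.sup_eq_union, ← sdiff_symmDiff_eq_sup,
    symmDiff_symmDiff_cancel_right] at hY

lemma disjoint_of_forall_mem_iff (hsup : SupersetClosed F) {ψ : α ≃ α}
    (hg : ∀ S, S ∈ F ↔ S.image ψ ∆ R ∈ F) (hM : IsMinimalMem F M) : Disjoint R M := by
  by_contra hRM
  refine hM.2 (M \ R) (Finset.ssubset_iff_subset_ne.2 ⟨sdiff_subset, fun h => hRM ?_⟩)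
    (hsup.sdiff_mem_of_forall_mem_iff hg hM.1)
  exact (Finset.sdiff_eq_self_iff_disjoint.1 h).symm

lemma symmDiff_mem_iff (hsup : SupersetClosed F) (hR : ∀ M, IsMinimalMem F M → Disjoint R M) :
    T ∆ R ∈ F ↔ T ∈ F := by
  simp only [hsup.mem_iff_exists_isMinimalMem_subset]
  refine exists_congr fun M => and_congr_right fun hM => ?_
  have hRM := disjoint_left.1 (hR M hM)
  constructor
  · intro h x hx
    rcases mem_symmDiff.1 (h hx) with hxT | hxR
    · exact hxT.1
    · exact absurd hx (hRM hxR.1)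
  · exact fun h x hx => mem_symmDiff.2 (Or.inl ⟨h hx, fun hxR => hRM hxR hx⟩)

lemma image_mem_iff [Finite α] (hsup : SupersetClosed F) {ψ : α ≃ α}
    (hψ : ∀ M, IsMinimalMem F M → IsMinimalMem F (M.image ψ)) : S.image ψ ∈ F ↔ S ∈ F := by
  constructor
  · intro hS
    obtain ⟨N, hN, hNS⟩ := exists_isMinimalMem_subset hS
    obtain ⟨M, hM, rfl⟩ := exists_isMinimalMem_image_eq hψ hN
    exact hsup hM.1 ((image_subset_image_iff ψ.injective).1 hNS)
  · intro hS
    obtain ⟨M, hM, hMS⟩ := exists_isMinimalMem_subset hS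
    exact hsup (hψ M hM).1 (image_subset_image hMS)

theorem forall_mem_iff_image_symmDiff_mem_iff [Finite α] (hsup : SupersetClosed F) (ψ : α ≃ α)
    (R : Finset α) :
    (∀ S, S ∈ F ↔ S.image ψ ∆ R ∈ F) ↔
      (∀ M, IsMinimalMem F M → Disjoint R M) ∧
        ∀ M, IsMinimalMem F M → IsMinimalMem F (M.image ψ) := by
  constructor
  · intro hg
    have hR := fun M (hM : IsMinimalMem F M) => hsup.disjoint_of_forall_mem_iff hg hM
    refine ⟨hR, fun M hM => hM.image_of_forall_mem_iff fun S => ?_⟩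
    rw [hg, hsup.symmDiff_mem_iff hR]
  · rintro ⟨hR, hψ⟩ S
    rw [hsup.symmDiff_mem_iff hR, hsup.image_mem_iff hψ]

end SupersetClosed

end Family

namespace TARGraph

variable [Fintype α] {F G : Finset (Finset α)}

lemma card_symmDiff_le_length {S T : {S // S ∈ F}} (p : (TARGraph F).Walk S T) :
    (S.1 ∆ T.1).card ≤ p.length := by
  induction p with
  | nil => simp
  | @cons S T U hST p ih =>
    have hST : (S.1 ∆ T.1).card = 1 := hST
    calc (S.1 ∆ U.1).card ≤ (S.1 ∆ T.1 ∪ T.1 ∆ U.1).card := card_le_card (symmDiff_triangle ..)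
      _ ≤ (S.1 ∆ T.1).card + (T.1 ∆ U.1).card := card_union_le _ _
      _ ≤ (SimpleGraph.Walk.cons _ p).length := by
        rw [SimpleGraph.Walk.length_cons]
        omega

lemma exists_walk_length_eq (hsup : SupersetClosed F) (S T : {S // S ∈ F}) :
    ∃ p : (TARGraph F).Walk S T, p.length = (S.1 ∆ T.1).card := by
  induction h : (S.1 ∆ T.1).card generalizing S with
  | zero =>
    obtain rfl : S = T := Subtype.ext (symmDiff_eq_bot.1 (card_eq_zero.1 h))
    exact ⟨.nil, rfl⟩
  | succ n ih =>
    have hne : S.1 ≠ T.1 := by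
      rintro hST
      simp [hST] at h
    obtain ⟨v, hv, hmem⟩ := hsup.exists_symmDiff_singleton_mem S.2 T.2 hne
    have hadj : (TARGraph F).Adj S ⟨_, hmem⟩ := by
      change (S.1 ∆ (S.1 ∆ {v})).card = 1
      rw [symmDiff_symmDiff_cancel_left, card_singleton]
    obtain ⟨p, hp⟩ := ih ⟨_, hmem⟩ (by
      rw [symmDiff_right_comm, symmDiff_singleton_of_mem hv, card_erase_of_mem hv, h]
      rfl)
    exact ⟨.cons hadj p, by rw [SimpleGraph.Walk.length_cons, hp]⟩

/-- Graph homomorphisms are `1`-Lipschitz for the path metric, which here is `|S ∆ T|`. -/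
lemma card_symmDiff_map_le (hsup : SupersetClosed F) (f : TARGraph F →g TARGraph G)
    (S T : {S // S ∈ F}) : ((f S).1 ∆ (f T).1).card ≤ (S.1 ∆ T.1).card := by
  obtain ⟨p, hp⟩ := exists_walk_length_eq hsup S T
  calc ((f S).1 ∆ (f T).1).card ≤ (p.map f).length := card_symmDiff_le_length _
    _ = (S.1 ∆ T.1).card := by rw [SimpleGraph.Walk.length_map, hp]

lemma card_symmDiff_iso (hF : SupersetClosed F) (hG : SupersetClosed G)
    (e : TARGraph F ≃g TARGraph G) (S T : {S // S ∈ F}) :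
    ((e S).1 ∆ (e T).1).card = (S.1 ∆ T.1).card := by
  refine le_antisymm (card_symmDiff_map_le hF e.toHom S T) ?_
  simpa using card_symmDiff_map_le hG e.symm.toHom (e S) (e T)

def isoOfPerm (g : Equiv.Perm (Finset α)) (hmem : ∀ S, S ∈ F ↔ g S ∈ G)
    (hcard : ∀ S T, (g S ∆ g T).card = (S ∆ T).card) : TARGraph F ≃g TARGraph G where
  toEquiv := g.subtypeEquiv hmem
  map_rel_iff' {S T} := by
    change (g S.1 ∆ g T.1).card = 1 ↔ (S.1 ∆ T.1).card = 1
    rw [hcard]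

lemma isoOfPerm_apply (g : Equiv.Perm (Finset α)) (hmem : ∀ S, S ∈ F ↔ g S ∈ G)
    (hcard : ∀ S T, (g S ∆ g T).card = (S ∆ T).card) (S : {S // S ∈ F}) :
    (isoOfPerm g hmem hcard S).1 = g S.1 :=
  rfl

end TARGraph

end

theorem stmt13 (F : Finset (Finset V)) (hne : F.Nonempty) (hsup : SupersetClosed F)
    (hn1 : ∀ S : Finset V, S.card = Fintype.card V - 1 → S ∈ F)
    (φ : {S : Finset V // S ∈ F} → {S : Finset V // S ∈ F}) :
    (∃ e : TARGraph F ≃g TARGraph F, ∀ S : {S : Finset V // S ∈ F}, e S = φ S) ↔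
    ∃ (R : Finset V) (ψ : V ≃ V),
      (∀ M : Finset V, IsMinimalMem F M → Disjoint R M) ∧
      (∀ M : Finset V, IsMinimalMem F M →
        IsMinimalMem F (M.image ψ) ∧ (M.image ψ).card = M.card) ∧
      ∀ S : {S : Finset V // S ∈ F}, (φ S).1 = symmDiff (S.1.image ψ) R := by
  constructor
  · rintro ⟨e, he⟩
    obtain ⟨S₀, hS₀⟩ := hne
    have huniv : univ ∈ F := hsup hS₀ (subset_univ _)
    have herase (v : V) : univ.erase v ∈ F :=
      hn1 _ (by rw [card_erase_of_mem (mem_univ v), card_univ])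
    obtain ⟨ψ, R, hψR⟩ := exists_eq_image_symmDiff_of_card_symmDiff_eq huniv herase
      (fun S => (e S).1) (TARGraph.card_symmDiff_iso hsup hsup e)
    have hmem (S : Finset V) : S ∈ F ↔ S.image ψ ∆ R ∈ F := by
      simpa using (imageSymmDiffPerm ψ R).iff_apply_of_restrict_surjective e.surjective
        (fun S => by rw [hψR, imageSymmDiffPerm_apply]) S
    obtain ⟨hR, hψ⟩ := (hsup.forall_mem_iff_image_symmDiff_mem_iff ψ R).1 hmem
    refine ⟨R, ψ, hR, fun M hM => ⟨hψ M hM, card_image_of_injective _ ψ.injective⟩, fun S => ?_⟩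
    rw [← he, hψR]
  · rintro ⟨R, ψ, hR, hψ, hφ⟩
    have hmem := (hsup.forall_mem_iff_image_symmDiff_mem_iff ψ R).2 ⟨hR, fun M hM => (hψ M hM).1⟩
    refine ⟨TARGraph.isoOfPerm (imageSymmDiffPerm ψ R) (by simpa using hmem)
      (card_symmDiff_imageSymmDiffPerm ψ R), fun S => Subtype.ext ?_⟩
    rw [TARGraph.isoOfPerm_apply, hφ, imageSymmDiffPerm_apply]
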